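/- arXiv:1603.07089 — 6 statements merged into one kernel-verified Lean document; each statement's English description precedes it below -/
import Mathlib

section
/- In the setting of the boundary triple {N_i, Γ₀, Γ₁} constructed from a self-adjoint extension A of S via Γ₀f = f_i and Γ₁f = P_{N_i}(A+i)f_A + i f_i, the corresponding Weyl–Titchmarsh function equals the Donoghue-type M-function: M(z) = z I_{N_i} + (z² + 1) P_{N_i} (A - z)⁻¹ ι_{N_i} for all z ∈ ρ(A), where ι_{N_i} is the inclusion of N_i into 𝔥 and P_{N_i} the orthogonal projection onto N_i. -/
open scoped ComplexInnerProductSpace ComplexConjugate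

/-- The eigenspace `ker (T - z)` of a possibly unbounded operator `T`,
as a submodule of the ambient space. -/
def pEigenspace {𝔥 : Type*} [NormedAddCommGroup 𝔥] [InnerProductSpace ℂ 𝔥]
    (T : 𝔥 →ₗ.[ℂ] 𝔥) (z : ℂ) : Submodule ℂ 𝔥 where
  carrier := {x | ∃ hx : x ∈ T.domain, T ⟨x, hx⟩ = z • x}
  add_mem' := by
    rintro x y ⟨hx, hfx⟩ ⟨hy, hfy⟩
    refine ⟨add_mem hx hy, ?_⟩
    have h : (⟨x + y, add_mem hx hy⟩ : T.domain) = ⟨x, hx⟩ + ⟨y, hy⟩ := rfl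
    rw [h, T.map_add, hfx, hfy, smul_add]
  zero_mem' := by
    refine ⟨zero_mem _, ?_⟩
    have h : (⟨(0 : 𝔥), zero_mem _⟩ : T.domain) = 0 := rfl
    rw [h, T.map_zero, smul_zero]
  smul_mem' := by
    rintro c x ⟨hx, hfx⟩
    refine ⟨Submodule.smul_mem _ c hx, ?_⟩
    have h : (⟨c • x, Submodule.smul_mem _ c hx⟩ : T.domain) = c • (⟨x, hx⟩ : T.domain) := rfl
    rw [h, T.map_smul, hfx, smul_comm]

/-- `R` is the (everywhere defined, bounded) resolvent of the possibly unbounded operator `T`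
at the point `z`, i.e. `R = (T - z)⁻¹`. -/
def IsResolventAt {H : Type*} [NormedAddCommGroup H] [InnerProductSpace ℂ H]
    (T : H →ₗ.[ℂ] H) (z : ℂ) (R : H →L[ℂ] H) : Prop :=
  (∀ y : H, ∃ hy : R y ∈ T.domain, T ⟨R y, hy⟩ - z • R y = y) ∧
  ∀ x : T.domain, R (T x - z • (x : H)) = (x : H)

/-!
Write `f ∈ ker (S* - z)` with `Γ₀ f = φ` as `f = f_A + φ`. Applying `S*` gives
`(A - z) f_A = (z - i) φ`, so `f_A = (z - i) (A - z)⁻¹ φ`, and then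
`(A + i) f_A + i φ = (z² + 1) (A - z)⁻¹ φ + z φ`. Projecting onto `N_i`, which is closed as an
eigenspace of an adjoint, gives `M(z) φ = Γ₁ f = z φ + (z² + 1) P_{N_i} (A - z)⁻¹ φ`.
-/

section

variable {𝔥 : Type*} [NormedAddCommGroup 𝔥] [InnerProductSpace ℂ 𝔥]

theorem mem_pEigenspace_adjoint_iff [CompleteSpace 𝔥] {S : 𝔥 →ₗ.[ℂ] 𝔥}
    (hS : Dense (S.domain : Set 𝔥)) (z : ℂ) (x : 𝔥) :
    x ∈ pEigenspace S.adjoint z ↔ ∀ f : S.domain, ⟪z • x, (f : 𝔥)⟫ = ⟪x, S f⟫ := by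
  constructor
  · rintro ⟨hx, hSx⟩ f
    rw [← hSx]
    exact S.adjoint_isFormalAdjoint hS ⟨x, hx⟩ f
  · intro h
    have hx : x ∈ S.adjoint.domain := LinearPMap.mem_adjoint_domain_of_exists x ⟨z • x, h⟩
    exact ⟨hx, LinearPMap.adjoint_apply_eq hS ⟨x, hx⟩ h⟩

theorem isClosed_pEigenspace_adjoint [CompleteSpace 𝔥] {S : 𝔥 →ₗ.[ℂ] 𝔥}
    (hS : Dense (S.domain : Set 𝔥)) (z : ℂ) : IsClosed (pEigenspace S.adjoint z : Set 𝔥) := by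
  have hset : (pEigenspace S.adjoint z : Set 𝔥)
      = ⋂ f : S.domain, {x : 𝔥 | ⟪z • x, (f : 𝔥)⟫ = ⟪x, S f⟫} := by
    ext x
    simpa only [SetLike.mem_coe, Set.mem_iInter, Set.mem_ofPred_eq] using
      mem_pEigenspace_adjoint_iff hS z x
  rw [hset]
  exact isClosed_iInter fun f => isClosed_eq
    ((continuous_const_smul z).inner continuous_const) (continuous_id.inner continuous_const)

theorem IsResolventAt.eq_smul_apply {T : 𝔥 →ₗ.[ℂ] 𝔥} {z : ℂ} {R : 𝔥 →L[ℂ] 𝔥}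
    (hR : IsResolventAt T z R) {x : T.domain} {c : ℂ} {y : 𝔥}
    (hx : T x - z • (x : 𝔥) = c • y) : (x : 𝔥) = c • R y := by
  rw [← map_smul, ← hx, hR.2]

theorem sub_smul_eq_of_mem_pEigenspace {B T : 𝔥 →ₗ.[ℂ] 𝔥} (hBT : B ≤ T) {z w : ℂ}
    {f g φ : 𝔥} (hf : f ∈ pEigenspace T z) (hφ : φ ∈ pEigenspace T w) (hg : g ∈ B.domain)
    (hfgφ : f = g + φ) : B ⟨g, hg⟩ - z • g = (z - w) • φ := by
  obtain ⟨hfT, hTf⟩ := hf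
  obtain ⟨hφT, hTφ⟩ := hφ
  have hsplit : (⟨f, hfT⟩ : T.domain) = ⟨g, hBT.1 hg⟩ + ⟨φ, hφT⟩ := Subtype.ext hfgφ
  have hTg : T ⟨g, hBT.1 hg⟩ = B ⟨g, hg⟩ := (hBT.2 rfl).symm
  rw [hsplit, T.map_add, hTg, hTφ, hfgφ] at hTf
  rw [sub_smul, ← sub_eq_zero, ← sub_eq_zero_of_eq hTf]
  module

end

theorem donoghue_weyl_function_general
    {𝔥 : Type*} [NormedAddCommGroup 𝔥] [InnerProductSpace ℂ 𝔥] [CompleteSpace 𝔥]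
    (S : 𝔥 →ₗ.[ℂ] 𝔥) (hSdense : Dense (S.domain : Set 𝔥))
    (A : 𝔥 →ₗ.[ℂ] 𝔥) (hASstar : A ≤ S.adjoint)
    -- the direct sum decomposition `dom S* = dom A ∔ N_i`, `f = f_A + f_i` :
    (πA πi : S.adjoint.domain →ₗ[ℂ] 𝔥)
    (hπA : ∀ f : S.adjoint.domain, πA f ∈ A.domain)
    (hdec : ∀ f : S.adjoint.domain, (f : 𝔥) = πA f + πi f)
    -- the boundary maps of the Donoghue boundary triple :
    (Γ₀ Γ₁ : S.adjoint.domain →ₗ[ℂ] (pEigenspace S.adjoint Complex.I))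
    (hΓ₀ : ∀ f : S.adjoint.domain, (Γ₀ f : 𝔥) = πi f)
    (hΓ₁ : ∀ f : S.adjoint.domain, ∀ u ∈ pEigenspace S.adjoint Complex.I,
      ⟪A ⟨πA f, hπA f⟩ + Complex.I • πA f - ((Γ₁ f : 𝔥) - Complex.I • πi f), u⟫ = 0)
    -- the resolvent set `ρ(A)` with resolvents `RA z = (A - z)⁻¹` :
    (ρA : Set ℂ) (RA : ℂ → 𝔥 →L[ℂ] 𝔥) (hρA : ∀ z ∈ ρA, IsResolventAt A z (RA z))
    -- `M` is the Weyl–Titchmarsh function of this boundary triple :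
    (M : ℂ → (pEigenspace S.adjoint Complex.I) →L[ℂ] (pEigenspace S.adjoint Complex.I))
    (hM : ∀ z ∈ ρA, ∀ φ : pEigenspace S.adjoint Complex.I,
      ∃ f : S.adjoint.domain, S.adjoint f = z • (f : 𝔥) ∧ Γ₀ f = φ ∧ Γ₁ f = M z φ) :
    -- conclusion: `M(z) = z I + (z² + 1) P_{N_i} (A - z)⁻¹ ι_{N_i}` on `ρ(A)`,
    -- with `w` denoting the orthogonal projection `P_{N_i} ((A - z)⁻¹ φ)` :
    ∀ z ∈ ρA, ∀ φ : pEigenspace S.adjoint Complex.I,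
      ∃ w : 𝔥, w ∈ pEigenspace S.adjoint Complex.I ∧
        (∀ u ∈ pEigenspace S.adjoint Complex.I, ⟪RA z (φ : 𝔥) - w, u⟫ = 0) ∧
        (M z φ : 𝔥) = z • (φ : 𝔥) + (z ^ 2 + 1) • w := by
  intro z hz φ
  have : CompleteSpace (pEigenspace S.adjoint Complex.I) :=
    (isClosed_pEigenspace_adjoint hSdense Complex.I).completeSpace_coe
  obtain ⟨f, hf, hΓ₀f, hΓ₁f⟩ := hM z hz φ
  have hπi : πi f = φ := by rw [← hΓ₀ f, hΓ₀f]
  have hAfA : A ⟨πA f, hπA f⟩ - z • πA f = (z - Complex.I) • (φ : 𝔥) :=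
    sub_smul_eq_of_mem_pEigenspace hASstar ⟨f.2, hf⟩ φ.2 (hπA f) (hπi ▸ hdec f)
  have hfA : πA f = (z - Complex.I) • RA z φ := (hρA z hz).eq_smul_apply hAfA
  have hMφ : (pEigenspace S.adjoint Complex.I).starProjection
      ((z ^ 2 + 1) • RA z φ + z • (φ : 𝔥)) = (M z φ : 𝔥) := by
    refine Submodule.eq_starProjection_of_mem_of_inner_eq_zero (M z φ).2 fun u hu => ?_
    rw [← hΓ₁ f u hu, hΓ₁f, hπi]
    congr 1
    linear_combination (norm := module) -hAfA - (z + Complex.I) • hfA + Complex.I_sq • RA z φ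
  refine ⟨Submodule.starProjection _ (RA z φ), Submodule.starProjection_apply_mem _ _,
    Submodule.starProjection_inner_eq_zero _, ?_⟩
  rw [← hMφ, map_add, map_smul, map_smul, Submodule.starProjection_eq_self_iff.mpr φ.2, add_comm]

theorem donoghue_weyl_function
    {𝔥 : Type*} [NormedAddCommGroup 𝔥] [InnerProductSpace ℂ 𝔥] [CompleteSpace 𝔥]
    (S : 𝔥 →ₗ.[ℂ] 𝔥) (hSdense : Dense (S.domain : Set 𝔥)) (hSclosed : S.IsClosed)
    (hSsymm : ∀ f g : S.domain, ⟪S f, (g : 𝔥)⟫ = ⟪(f : 𝔥), S g⟫)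
    (A : 𝔥 →ₗ.[ℂ] 𝔥) (hAsa : IsSelfAdjoint A) (hSA : S ≤ A) (hASstar : A ≤ S.adjoint)
    -- the direct sum decomposition `dom S* = dom A ∔ N_i`, `f = f_A + f_i` :
    (πA πi : S.adjoint.domain →ₗ[ℂ] 𝔥)
    (hπA : ∀ f : S.adjoint.domain, πA f ∈ A.domain)
    (hπi : ∀ f : S.adjoint.domain, πi f ∈ pEigenspace S.adjoint Complex.I)
    (hdec : ∀ f : S.adjoint.domain, (f : 𝔥) = πA f + πi f)
    -- the boundary maps of the Donoghue boundary triple :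
    (Γ₀ Γ₁ : S.adjoint.domain →ₗ[ℂ] (pEigenspace S.adjoint Complex.I))
    (hΓ₀ : ∀ f : S.adjoint.domain, (Γ₀ f : 𝔥) = πi f)
    (hΓ₁ : ∀ f : S.adjoint.domain, ∀ u ∈ pEigenspace S.adjoint Complex.I,
      ⟪A ⟨πA f, hπA f⟩ + Complex.I • πA f - ((Γ₁ f : 𝔥) - Complex.I • πi f), u⟫ = 0)
    -- the resolvent set `ρ(A)` with resolvents `RA z = (A - z)⁻¹` :
    (ρA : Set ℂ) (RA : ℂ → 𝔥 →L[ℂ] 𝔥) (hρA : ∀ z ∈ ρA, IsResolventAt A z (RA z))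
    -- `M` is the Weyl–Titchmarsh function of this boundary triple :
    (M : ℂ → (pEigenspace S.adjoint Complex.I) →L[ℂ] (pEigenspace S.adjoint Complex.I))
    (hM : ∀ z ∈ ρA, ∀ φ : pEigenspace S.adjoint Complex.I,
      ∃ f : S.adjoint.domain, S.adjoint f = z • (f : 𝔥) ∧ Γ₀ f = φ ∧ Γ₁ f = M z φ) :
    -- conclusion: `M(z) = z I + (z² + 1) P_{N_i} (A - z)⁻¹ ι_{N_i}` on `ρ(A)`,
    -- with `w` denoting the orthogonal projection `P_{N_i} ((A - z)⁻¹ φ)` :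
    ∀ z ∈ ρA, ∀ φ : pEigenspace S.adjoint Complex.I,
      ∃ w : 𝔥, w ∈ pEigenspace S.adjoint Complex.I ∧
        (∀ u ∈ pEigenspace S.adjoint Complex.I, ⟪RA z (φ : 𝔥) - w, u⟫ = 0) ∧
        (M z φ : 𝔥) = z • (φ : 𝔥) + (z ^ 2 + 1) • w :=
  donoghue_weyl_function_general S hSdense A hASstar πA πi hπA hdec Γ₀ Γ₁ hΓ₀ hΓ₁ ρA RA hρA M hM
end

section
/- Let {G, Γ₀, Γ₁} be a boundary triple for S*, Θ a densely defined closed operator in G, B = S*↾ker(Γ₁ - ΘΓ₀), and Γ₀^Θ = Γ₁ - ΘΓ₀ with dom(Γ₀^Θ) = {f ∈ dom(S*) : Γ₀f ∈ dom(Θ)}. Then for every z in the resolvent set of B, the direct sum decomposition dom(Γ₀^Θ) = dom(B) ∔ (ker(S* - z) ∩ dom(Γ₀^Θ)) holds. -/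
open scoped ComplexInnerProductSpace ComplexConjugate

variable {𝔥 G : Type*}
  [NormedAddCommGroup 𝔥] [InnerProductSpace ℂ 𝔥] [CompleteSpace 𝔥]
  [NormedAddCommGroup G] [InnerProductSpace ℂ G] [CompleteSpace G]

/-- A boundary triple `{G, Γ₀, Γ₁}` for the (adjoint) operator `Sstar`:
the abstract Green identity holds and `(Γ₀, Γ₁)` maps `dom Sstar` onto `G × G`. -/
structure BoundaryTriple (Sstar : 𝔥 →ₗ.[ℂ] 𝔥) (G : Type*)
    [NormedAddCommGroup G] [InnerProductSpace ℂ G] where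
  Γ₀ : Sstar.domain →ₗ[ℂ] G
  Γ₁ : Sstar.domain →ₗ[ℂ] G
  green : ∀ f g : Sstar.domain,
    ⟪Sstar f, (g : 𝔥)⟫ - ⟪(f : 𝔥), Sstar g⟫ = ⟪Γ₁ f, Γ₀ g⟫ - ⟪Γ₀ f, Γ₁ g⟫
  surj : ∀ φ ψ : G, ∃ f : Sstar.domain, Γ₀ f = φ ∧ Γ₁ f = ψ

/-- `R` is the resolvent at `z` of `A₀ = Sstar ↾ ker Γ₀`. -/
def IsKerResolvent {Sstar : 𝔥 →ₗ.[ℂ] 𝔥} (BT : BoundaryTriple Sstar G)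
    (z : ℂ) (R : 𝔥 →L[ℂ] 𝔥) : Prop :=
  (∀ y : 𝔥, ∃ f : Sstar.domain, (f : 𝔥) = R y ∧ BT.Γ₀ f = 0 ∧
    Sstar f - z • (f : 𝔥) = y) ∧
  ∀ f : Sstar.domain, BT.Γ₀ f = 0 → R (Sstar f - z • (f : 𝔥)) = (f : 𝔥)

/-- `γ` and `M` are the γ-field and the Weyl–Titchmarsh function of the boundary triple `BT`
on the set `ρ₀` (the resolvent set of `A₀ = Sstar ↾ ker Γ₀`):  for `z ∈ ρ₀` and `φ ∈ G`,
`γ z φ` is the unique element `f ∈ ker (Sstar - z)` with `Γ₀ f = φ`, and `M z φ = Γ₁ f`. -/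
def IsWeylPair {Sstar : 𝔥 →ₗ.[ℂ] 𝔥} (BT : BoundaryTriple Sstar G) (ρ₀ : Set ℂ)
    (γ : ℂ → G →L[ℂ] 𝔥) (M : ℂ → G →L[ℂ] G) : Prop :=
  ∀ z ∈ ρ₀,
    (∀ φ : G, ∃ f : Sstar.domain, (f : 𝔥) = γ z φ ∧ Sstar f = z • (f : 𝔥) ∧
      BT.Γ₀ f = φ ∧ BT.Γ₁ f = M z φ) ∧
    ∀ f : Sstar.domain, Sstar f = z • (f : 𝔥) → γ z (BT.Γ₀ f) = (f : 𝔥)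

/-- `R` is the resolvent at `z` of `B = Sstar ↾ ker (Γ₁ - Θ Γ₀)`. -/
def IsThetaResolvent {Sstar : 𝔥 →ₗ.[ℂ] 𝔥} (BT : BoundaryTriple Sstar G)
    (Θ : G →ₗ.[ℂ] G) (z : ℂ) (R : 𝔥 →L[ℂ] 𝔥) : Prop :=
  (∀ y : 𝔥, ∃ f : Sstar.domain, (f : 𝔥) = R y ∧
      (∃ hm : BT.Γ₀ f ∈ Θ.domain, BT.Γ₁ f = Θ ⟨BT.Γ₀ f, hm⟩) ∧
      Sstar f - z • (f : 𝔥) = y) ∧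
  ∀ f : Sstar.domain, ∀ hm : BT.Γ₀ f ∈ Θ.domain, BT.Γ₁ f = Θ ⟨BT.Γ₀ f, hm⟩ →
    R (Sstar f - z • (f : 𝔥)) = (f : 𝔥)

/-!
STATEMENT 13: For a boundary triple `{G, Γ₀, Γ₁}` for `S*`, a densely defined closed operator
`Θ` in `G`, `B = S*↾ker(Γ₁ - ΘΓ₀)`, and `Γ₀^Θ = Γ₁ - ΘΓ₀` on
`dom Γ₀^Θ = {f : Γ₀ f ∈ dom Θ}`: for every `z ∈ ρ(B)` one has the direct sum decomposition
`dom Γ₀^Θ = dom B ∔ (ker (S* - z) ∩ dom Γ₀^Θ)`.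
-/

theorem domain_decomposition_gammaTheta (Sstar : 𝔥 →ₗ.[ℂ] 𝔥)
    (BT : BoundaryTriple Sstar G)
    (Θ : G →ₗ.[ℂ] G) (hΘdense : Dense (Θ.domain : Set G)) (hΘclosed : Θ.IsClosed)
    -- `z ∈ ρ(B)`, with resolvent `R = (B - z)⁻¹` :
    (z : ℂ) (R : 𝔥 →L[ℂ] 𝔥) (hR : IsThetaResolvent BT Θ z R) :
    -- existence of the decomposition `f = g + h` with `g ∈ dom B`,
    -- `h ∈ ker (S* - z) ∩ dom Γ₀^Θ` :
    (∀ f : Sstar.domain, BT.Γ₀ f ∈ Θ.domain →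
      ∃ g h : Sstar.domain, f = g + h ∧
        (∃ hm : BT.Γ₀ g ∈ Θ.domain, BT.Γ₁ g = Θ ⟨BT.Γ₀ g, hm⟩) ∧
        Sstar h = z • (h : 𝔥) ∧ BT.Γ₀ h ∈ Θ.domain) ∧
    -- the sum is direct :
    (∀ g h : Sstar.domain,
      (∃ hm : BT.Γ₀ g ∈ Θ.domain, BT.Γ₁ g = Θ ⟨BT.Γ₀ g, hm⟩) →
      Sstar h = z • (h : 𝔥) → BT.Γ₀ h ∈ Θ.domain →
      g + h = 0 → g = 0 ∧ h = 0) := by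
  constructor
  · intro f hf
    obtain ⟨g, hg1, hg2, hg3⟩ := hR.1 (Sstar f - z • (f : 𝔥))
    refine ⟨g, f - g, by abel, hg2, ?_, ?_⟩
    · have : Sstar (f - g) = Sstar f - Sstar g := map_sub _ _ _
      have hc : ((f - g : Sstar.domain) : 𝔥) = (f : 𝔥) - (g : 𝔥) := rfl
      rw [this, hc, smul_sub]
      linear_combination (norm := module) -hg3
    · have : BT.Γ₀ (f - g) = BT.Γ₀ f - BT.Γ₀ g := map_sub _ _ _
      rw [this]
      exact sub_mem hf hg2.choose
  · intro g h hg hSh hΓh hsum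
    obtain ⟨hm, hΓ⟩ := hg
    have hgh : g = -h := eq_neg_of_add_eq_zero_left hsum
    have hghc : (g : 𝔥) = -(h : 𝔥) := by rw [hgh]; rfl
    have hSg : Sstar g - z • (g : 𝔥) = 0 := by
      rw [hgh]
      rw [show (Sstar (-h) : 𝔥) = -(Sstar h) from map_neg Sstar.toFun h, hSh]
      simp
    have := hR.2 g hm hΓ
    rw [hSg] at this
    simp only [map_zero] at this
    have hg0 : g = 0 := Subtype.ext this.symm
    exact ⟨hg0, by rw [hg0] at hsum; simpa using hsum⟩
end

section
/- Let {G, Γ₀, Γ₁} be a boundary triple for S*, Θ a densely defined closed operator in G with B = S*↾ker(Γ₁−ΘΓ₀) and B* = S*↾ker(Γ₁−Θ*Γ₀). For z ∈ ρ(B) define γ_Θ(z) on ran(Γ₀^Θ) by γ_Θ(z)φ = f_z, where f_z is the unique element of ker(S*−z) ∩ dom(Γ₀^Θ) with (Γ₁−ΘΓ₀)f_z = φ. Then the adjoint γ_Θ(z)* is everywhere defined and bounded, given by γ_Θ(z)* h = −Γ₀ (B* − z̄)⁻¹ h for h ∈ 𝔥; in particular γ_Θ(z) is a bounded, densely defined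 operator from G into 𝔥. -/
open scoped ComplexInnerProductSpace ComplexConjugate

variable {𝔥 G : Type*}
  [NormedAddCommGroup 𝔥] [InnerProductSpace ℂ 𝔥] [CompleteSpace 𝔥]
  [NormedAddCommGroup G] [InnerProductSpace ℂ G] [CompleteSpace G]

/-!
STATEMENT 14: For a boundary triple `{G, Γ₀, Γ₁}` for `S*`, a densely defined closed
operator `Θ` in `G` with `B = S*↾ker(Γ₁ - ΘΓ₀)` and `B* = S*↾ker(Γ₁ - Θ*Γ₀)`, and
`z ∈ ρ(B)`, the generalized γ-field `γ_Θ(z)`, defined on `ran Γ₀^Θ` by `γ_Θ(z)φ = f_z`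
with `f_z ∈ ker(S* - z) ∩ dom Γ₀^Θ` and `(Γ₁ - ΘΓ₀) f_z = φ`, is densely defined and
bounded, and its adjoint is everywhere defined and bounded,
given by `γ_Θ(z)* h = -Γ₀ (B* - z̄)⁻¹ h`.
-/

theorem gammaTheta_adjoint (Sstar : 𝔥 →ₗ.[ℂ] 𝔥)
    (BT : BoundaryTriple Sstar G)
    (Θ : G →ₗ.[ℂ] G) (hΘdense : Dense (Θ.domain : Set G)) (hΘclosed : Θ.IsClosed)
    -- `z ∈ ρ(B)` with resolvent `R = (B - z)⁻¹` :
    (z : ℂ) (R : 𝔥 →L[ℂ] 𝔥) (hR : IsThetaResolvent BT Θ z R)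
    -- `z̄ ∈ ρ(B*)` with resolvent `RBs = (B* - z̄)⁻¹`, where `B* = S*↾ker(Γ₁ - Θ*Γ₀)` :
    (RBs : 𝔥 →L[ℂ] 𝔥) (hRBs : IsThetaResolvent BT Θ.adjoint (conj z) RBs)
    -- the generalized γ-field `γ_Θ(z)` :
    (γΘ : G →ₗ.[ℂ] 𝔥)
    (hdom : ∀ φ : G, φ ∈ γΘ.domain ↔ ∃ f : Sstar.domain,
      ∃ hm : BT.Γ₀ f ∈ Θ.domain, BT.Γ₁ f - Θ ⟨BT.Γ₀ f, hm⟩ = φ)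
    (hval : ∀ φ : γΘ.domain, ∃ f : Sstar.domain, (f : 𝔥) = γΘ φ ∧
      Sstar f = z • (f : 𝔥) ∧
      ∃ hm : BT.Γ₀ f ∈ Θ.domain, BT.Γ₁ f - Θ ⟨BT.Γ₀ f, hm⟩ = (φ : G)) :
    -- `γ_Θ(z)` is densely defined :
    Dense (γΘ.domain : Set G) ∧
    -- `γ_Θ(z)` is bounded :
    (∃ C : ℝ, ∀ φ : γΘ.domain, ‖γΘ φ‖ ≤ C * ‖(φ : G)‖) ∧
    -- the adjoint is everywhere defined, given by `γ_Θ(z)* h = -Γ₀ (B* - z̄)⁻¹ h` :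
    (∀ h : 𝔥, ∀ g : Sstar.domain, (g : 𝔥) = RBs h →
      ∀ φ : γΘ.domain, ⟪γΘ φ, h⟫ = ⟪(φ : G), -(BT.Γ₀ g)⟫) := by
  -- The key adjoint identity (third conjunct), proved first.
  have key : ∀ h : 𝔥, ∀ g : Sstar.domain, (g : 𝔥) = RBs h →
      ∀ φ : γΘ.domain, ⟪γΘ φ, h⟫ = ⟪(φ : G), -(BT.Γ₀ g)⟫ := by
    intro h g hg φ
    obtain ⟨f, hf, hfz, hm, hφ⟩ := hval φ
    obtain ⟨g₀, hg₀, ⟨hm', hbc⟩, hres⟩ := hRBs.1 h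
    have hgg : g = g₀ := Subtype.coe_injective (hg.trans hg₀.symm)
    subst hgg
    have green := BT.green f g
    have hΘadj : ⟪(BT.Γ₀ f : G), BT.Γ₁ g⟫ = ⟪(Θ ⟨BT.Γ₀ f, hm⟩ : G), BT.Γ₀ g⟫ := by
      rw [hbc, ← inner_conj_symm,
        LinearPMap.adjoint_isFormalAdjoint hΘdense ⟨BT.Γ₀ g, hm'⟩ ⟨BT.Γ₀ f, hm⟩,
        inner_conj_symm]
    have hφ' : ⟪(φ : G), BT.Γ₀ g⟫
        = ⟪BT.Γ₁ f, BT.Γ₀ g⟫ - ⟪(Θ ⟨BT.Γ₀ f, hm⟩ : G), BT.Γ₀ g⟫ := by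
      rw [← hφ, inner_sub_left]
    have hfz' : ⟪Sstar f, (g : 𝔥)⟫ = conj z * ⟪(f : 𝔥), (g : 𝔥)⟫ := by
      rw [hfz, inner_smul_left]
    rw [← hf, ← hres]
    rw [inner_sub_right, inner_smul_right, inner_neg_right]
    linear_combination (-1 : ℂ) * green + hΘadj + hφ' + hfz'
  -- the domain of `γΘ` is all of `G`
  have hall : ∀ φ : G, φ ∈ γΘ.domain := by
    intro φ
    rw [hdom]
    obtain ⟨f, h0, h1⟩ := BT.surj 0 φ
    have hm : BT.Γ₀ f ∈ Θ.domain := by rw [h0]; exact Θ.domain.zero_mem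
    refine ⟨f, hm, ?_⟩
    have hz : (⟨BT.Γ₀ f, hm⟩ : Θ.domain) = 0 := Subtype.ext h0
    rw [hz]
    simp [h1]
  refine ⟨?_, ?_, key⟩
  · have : (γΘ.domain : Set G) = Set.univ := Set.eq_univ_of_forall hall
    rw [this]
    exact dense_univ
  · -- boundedness via Banach–Steinhaus applied to `h ↦ ⟪γΘ φ, h⟫`, ‖φ‖ ≤ 1
    obtain ⟨C₀, hC₀⟩ :
        ∃ C₀, ∀ i : {φ : γΘ.domain // ‖(φ : G)‖ ≤ 1}, ‖innerSL ℂ (γΘ i.1)‖ ≤ C₀ := by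
      apply banach_steinhaus
      intro h
      obtain ⟨g, hg, -, -⟩ := hRBs.1 h
      refine ⟨‖BT.Γ₀ g‖, fun i => ?_⟩
      have hkey := key h g hg i.1
      calc ‖innerSL ℂ (γΘ i.1) h‖ = ‖⟪(i.1 : G), -(BT.Γ₀ g)⟫‖ := by
            rw [innerSL_apply_apply, hkey]
        _ ≤ ‖(i.1 : G)‖ * ‖BT.Γ₀ g‖ := by
            simpa using norm_inner_le_norm (𝕜 := ℂ) (i.1 : G) (-(BT.Γ₀ g))
        _ ≤ 1 * ‖BT.Γ₀ g‖ := by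
            have := i.2
            gcongr
        _ = ‖BT.Γ₀ g‖ := one_mul _
    set C : ℝ := max C₀ 0 with hC
    have hCnn : 0 ≤ C := le_max_right _ _
    have hunit : ∀ φ : γΘ.domain, ‖(φ : G)‖ ≤ 1 → ‖γΘ φ‖ ≤ C := by
      intro φ hφ1
      have h1 : ‖innerSL ℂ (γΘ φ)‖ ≤ C₀ := hC₀ ⟨φ, hφ1⟩
      have h2 : ‖innerSL ℂ (γΘ φ) (γΘ φ)‖ = ‖γΘ φ‖ ^ 2 := by
        rw [innerSL_apply_apply, inner_self_eq_norm_sq_to_K]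
        simp [norm_pow]
      have h3 : ‖γΘ φ‖ ^ 2 ≤ C₀ * ‖γΘ φ‖ := by
        rw [← h2]
        exact le_trans ((innerSL ℂ (γΘ φ)).le_opNorm _) (by gcongr)
      rcases eq_or_lt_of_le (norm_nonneg (γΘ φ)) with h0 | h0
      · rw [← h0]; exact hCnn
      · have h4 : ‖γΘ φ‖ * ‖γΘ φ‖ ≤ C₀ * ‖γΘ φ‖ := by nlinarith [h3]
        have h5 : ‖γΘ φ‖ ≤ C₀ := le_of_mul_le_mul_right h4 h0
        exact h5.trans (le_max_left _ _)
    refine ⟨C, fun φ => ?_⟩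
    by_cases h0 : (φ : G) = 0
    · have hφ0 : φ = 0 := Subtype.ext h0
      subst hφ0
      simp
    · have hn : 0 < ‖(φ : G)‖ := norm_pos_iff.mpr h0
      set ψ : γΘ.domain := ((‖(φ : G)‖⁻¹ : ℝ) : ℂ) • φ with hψdef
      have hψc : (ψ : G) = ((‖(φ : G)‖⁻¹ : ℝ) : ℂ) • (φ : G) := rfl
      have hψ1 : ‖(ψ : G)‖ ≤ 1 := by
        rw [hψc, norm_smul]
        simp only [Complex.norm_real, norm_inv, Real.norm_eq_abs,
          abs_of_nonneg (norm_nonneg _)]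
        rw [inv_mul_cancel₀ (ne_of_gt hn)]
      have hψv : γΘ ψ = ((‖(φ : G)‖⁻¹ : ℝ) : ℂ) • γΘ φ := by
        rw [hψdef, LinearPMap.map_smul]
      have := hunit ψ hψ1
      rw [hψv, norm_smul] at this
      simp only [Complex.norm_real, norm_inv, Real.norm_eq_abs,
        abs_of_nonneg (norm_nonneg _)] at this
      calc ‖γΘ φ‖ = ‖(φ : G)‖ * (‖(φ : G)‖⁻¹ * ‖γΘ φ‖) := by
            field_simp
        _ ≤ ‖(φ : G)‖ * C := by gcongr
        _ = C * ‖(φ : G)‖ := mul_comm _ _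
end

section
/- Let {G, Γ₀, Γ₁} be a boundary triple for S*, Θ a densely defined closed operator in G with B = S*↾ker(Γ₁−ΘΓ₀), and γ_Θ(z) the generalized γ-field defined on ran(Γ₀^Θ) by γ_Θ(z)φ = f_z with f_z ∈ ker(S*−z) ∩ dom(Γ₀^Θ), (Γ₁−ΘΓ₀)f_z = φ. Then for all z, ζ ∈ ρ(B) and all φ ∈ ran(Γ₀^Θ), γ_Θ(z)φ = (I + (z−ζ)(B−z)⁻¹) γ_Θ(ζ)φ. -/
open scoped ComplexInnerProductSpace ComplexConjugate

variable {𝔥 G : Type*}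
  [NormedAddCommGroup 𝔥] [InnerProductSpace ℂ 𝔥] [CompleteSpace 𝔥]
  [NormedAddCommGroup G] [InnerProductSpace ℂ G] [CompleteSpace G]

/-!
STATEMENT 15: For a boundary triple `{G, Γ₀, Γ₁}` for `S*`, a densely defined closed operator
`Θ` in `G` with `B = S*↾ker(Γ₁ - ΘΓ₀)`, and the generalized γ-field `γ_Θ` (where
`γ_Θ(z)φ = f_z ∈ ker(S* - z) ∩ dom Γ₀^Θ` with `(Γ₁ - ΘΓ₀) f_z = φ`): for all
`z, ζ ∈ ρ(B)` and all `φ ∈ ran Γ₀^Θ`,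
`γ_Θ(z)φ = (I + (z - ζ)(B - z)⁻¹) γ_Θ(ζ)φ`.
-/

theorem gammaTheta_translation (Sstar : 𝔥 →ₗ.[ℂ] 𝔥)
    (BT : BoundaryTriple Sstar G)
    (Θ : G →ₗ.[ℂ] G) (hΘdense : Dense (Θ.domain : Set G)) (hΘclosed : Θ.IsClosed)
    -- `z, ζ ∈ ρ(B)` with resolvents `Rz = (B - z)⁻¹`, `Rζ = (B - ζ)⁻¹` :
    (z ζ : ℂ) (Rz Rζ : 𝔥 →L[ℂ] 𝔥)
    (hRz : IsThetaResolvent BT Θ z Rz) (hRζ : IsThetaResolvent BT Θ ζ Rζ) :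
    ∀ φ : G, ∀ fz fζ : Sstar.domain,
      -- `fz = γ_Θ(z) φ` :
      Sstar fz = z • (fz : 𝔥) →
      (∃ hm : BT.Γ₀ fz ∈ Θ.domain, BT.Γ₁ fz - Θ ⟨BT.Γ₀ fz, hm⟩ = φ) →
      -- `fζ = γ_Θ(ζ) φ` :
      Sstar fζ = ζ • (fζ : 𝔥) →
      (∃ hm : BT.Γ₀ fζ ∈ Θ.domain, BT.Γ₁ fζ - Θ ⟨BT.Γ₀ fζ, hm⟩ = φ) →
      -- `γ_Θ(z)φ = (I + (z - ζ)(B - z)⁻¹) γ_Θ(ζ)φ` :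
      (fz : 𝔥) = (fζ : 𝔥) + (z - ζ) • Rz (fζ : 𝔥) := by
  rintro φ fz fζ hfz ⟨hmz, hφz⟩ hfζ ⟨hmζ, hφζ⟩
  set g : Sstar.domain := fz - fζ with hg
  have hΓ₀g : BT.Γ₀ g = BT.Γ₀ fz - BT.Γ₀ fζ := map_sub _ _ _
  have hm : BT.Γ₀ g ∈ Θ.domain := by
    rw [hΓ₀g]; exact sub_mem hmz hmζ
  have hsub : (⟨BT.Γ₀ g, hm⟩ : Θ.domain) = ⟨BT.Γ₀ fz, hmz⟩ - ⟨BT.Γ₀ fζ, hmζ⟩ := by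
    ext; simp [hΓ₀g]
  have hΓ₁g : BT.Γ₁ g = Θ ⟨BT.Γ₀ g, hm⟩ := by
    rw [hsub, map_sub, Θ.map_sub]
    have e1 : BT.Γ₁ fz = φ + Θ ⟨BT.Γ₀ fz, hmz⟩ := by rw [← hφz]; abel
    have e2 : BT.Γ₁ fζ = φ + Θ ⟨BT.Γ₀ fζ, hmζ⟩ := by rw [← hφζ]; abel
    rw [e1, e2]; abel
  have key := hRz.2 g hm hΓ₁g
  have hSg : Sstar g - z • (g : 𝔥) = (z - ζ) • (fζ : 𝔥) := by
    have : Sstar g = Sstar fz - Sstar fζ := Sstar.map_sub _ _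
    rw [this, hfz, hfζ]
    have hco : ((g : 𝔥)) = (fz : 𝔥) - (fζ : 𝔥) := rfl
    rw [hco]
    simp [smul_sub, sub_smul]
  rw [hSg] at key
  have : Rz ((z - ζ) • (fζ : 𝔥)) = (z - ζ) • Rz (fζ : 𝔥) := map_smul _ _ _
  rw [this] at key
  have hco : ((g : 𝔥)) = (fz : 𝔥) - (fζ : 𝔥) := rfl
  rw [hco] at key
  rw [key]; abel
end

section
/- Let Ω ⊂ ℝⁿ (n ≥ 2) be a bounded Lipschitz domain, q ∈ L^∞(Ω) complex-valued, Θ ∈ B(L²(∂Ω)), and let A_Θ and Ã_{Θ*} be the Robin realizations of −Δ + q and −Δ + q̄ with boundary conditions Θγ_D g = γ_N g and Θ*γ_D g = γ_N g, respectively, on dom contained in H^{3/2}_Δ(Ω). For z ∈ ρ(A_Θ) with z̄ ∈ ρ(Ã_{Θ*}), the solution operator P_Θ(z) : L²(∂Ω) → L²(Ω), mapping φ to the unique f_z ∈ H^{3/2}_Δ(Ω) with (−Δ+q)f_z = z f_z and γ_N f_z − Θγ_D f_z = φ, is bounded, with adjoint P_Θ(z)* = γ_D (Ã_{Θ*} −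 z̄)⁻¹ ∈ B(L²(Ω), L²(∂Ω)). -/
open scoped ComplexInnerProductSpace ComplexConjugate

/-
Abstract setting for the Schrödinger operator on a bounded Lipschitz domain:
`𝔥` plays the role of `L²(Ω)`, `𝔟` that of `L²(∂Ω)`, `V ⊆ 𝔥` that of `H^{3/2}_Δ(Ω)`,
`L, Lt : V → 𝔥` those of the differential expressions `-Δ + q` and `-Δ + q̄`, and
`γD, γN : V → 𝔟` the Dirichlet and Neumann trace maps, subject to Green's second identity.
-/
variable {𝔥 𝔟 : Type*}
  [NormedAddCommGroup 𝔥] [InnerProductSpace ℂ 𝔥] [CompleteSpace 𝔥]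
  [NormedAddCommGroup 𝔟] [InnerProductSpace ℂ 𝔟] [CompleteSpace 𝔟]

/-- `R ∈ B(𝔥)` is the resolvent at `z` of the realization of the differential expression
`L : V → 𝔥` subject to the boundary condition `bc`. -/
def IsRealizationResolvent {V : Submodule ℂ 𝔥} (L : V →ₗ[ℂ] 𝔥) (bc : V → Prop)
    (z : ℂ) (R : 𝔥 →L[ℂ] 𝔥) : Prop :=
  (∀ y : 𝔥, ∃ f : V, (f : 𝔥) = R y ∧ bc f ∧ L f - z • (f : 𝔥) = y) ∧
  ∀ f : V, bc f → R (L f - z • (f : 𝔥)) = (f : 𝔥)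

/-!
STATEMENT 17: For the Robin realizations `A_Θ` of `-Δ + q` and `Ã_{Θ*}` of `-Δ + q̄` on a
bounded Lipschitz domain, with `z ∈ ρ(A_Θ)` and `z̄ ∈ ρ(Ã_{Θ*})`, the Robin solution operator
`P_Θ(z) : L²(∂Ω) → L²(Ω)`, `φ ↦ f_z` where `(-Δ+q) f_z = z f_z`, `γ_N f_z - Θ γ_D f_z = φ`,
is bounded, with adjoint `P_Θ(z)* = γ_D (Ã_{Θ*} - z̄)⁻¹ ∈ B(L²(Ω), L²(∂Ω))`.
-/

theorem robin_solution_operator_bounded_and_adjoint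
    (V : Submodule ℂ 𝔥) (L Lt : V →ₗ[ℂ] 𝔥) (γD γN : V →ₗ[ℂ] 𝔟)
    -- Green's second identity :
    (hGreen : ∀ f g : V,
      ⟪L f, (g : 𝔥)⟫ - ⟪(f : 𝔥), Lt g⟫ = ⟪γD f, γN g⟫ - ⟪γN f, γD g⟫)
    (Θ : 𝔟 →L[ℂ] 𝔟) (z : ℂ)
    -- `z ∈ ρ(A_Θ)` :
    (RΘ : 𝔥 →L[ℂ] 𝔥)
    (hRΘ : IsRealizationResolvent L (fun f => Θ (γD f) = γN f) z RΘ)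
    -- `z̄ ∈ ρ(Ã_{Θ*})` :
    (Rt : 𝔥 →L[ℂ] 𝔥)
    (hRt : IsRealizationResolvent Lt
      (fun f => ContinuousLinearMap.adjoint Θ (γD f) = γN f) (conj z) Rt)
    -- the Robin solution operator `P_Θ(z)` :
    (PΘ : 𝔟 →ₗ[ℂ] 𝔥)
    (hPΘ : ∀ φ : 𝔟, ∃ f : V, (f : 𝔥) = PΘ φ ∧ L f = z • (f : 𝔥) ∧
      γN f - Θ (γD f) = φ) :
    -- `P_Θ(z)` is bounded :
    (∃ C : ℝ, ∀ φ : 𝔟, ‖PΘ φ‖ ≤ C * ‖φ‖) ∧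
    -- its adjoint is `P_Θ(z)* = γ_D (Ã_{Θ*} - z̄)⁻¹` :
    (∀ (φ : 𝔟) (k : 𝔥) (g : V), (g : 𝔥) = Rt k →
      ⟪PΘ φ, k⟫ = ⟪φ, γD g⟫) := by

  -- key adjoint identity
  have key : ∀ (φ : 𝔟) (k : 𝔥) (g : V), (g : 𝔥) = Rt k → ⟪PΘ φ, k⟫ = ⟪φ, γD g⟫ := by
    intro φ k g hg
    obtain ⟨f, hf, hLf, hbcf⟩ := hPΘ φ
    obtain ⟨g', hg', hbcg', hLg'⟩ := hRt.1 k
    have hgg' : g = g' := Subtype.ext (by rw [hg, hg'])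
    subst hgg'
    have hbcg : ContinuousLinearMap.adjoint Θ (γD g) = γN g := hbcg'
    have hk : Lt g - (conj z) • (g : 𝔥) = k := hLg'
    have hG := hGreen f g
    rw [hLf, inner_smul_left] at hG
    calc ⟪PΘ φ, k⟫ = ⟪(f : 𝔥), Lt g - (conj z) • (g : 𝔥)⟫ := by rw [hf, hk]
      _ = ⟪(f : 𝔥), Lt g⟫ - conj z * ⟪(f : 𝔥), (g : 𝔥)⟫ := by
          rw [inner_sub_right, inner_smul_right]
      _ = ⟪γN f, γD g⟫ - ⟪γD f, γN g⟫ := by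
          have : ⟪(f : 𝔥), Lt g⟫ = conj z * ⟪(f : 𝔥), (g : 𝔥)⟫
              - (⟪γD f, γN g⟫ - ⟪γN f, γD g⟫) := by linear_combination -hG
          rw [this]; ring
      _ = ⟪γN f, γD g⟫ - ⟪Θ (γD f), γD g⟫ := by
          rw [← hbcg, ContinuousLinearMap.adjoint_inner_right]
      _ = ⟪γN f - Θ (γD f), γD g⟫ := by rw [inner_sub_left]
      _ = ⟪φ, γD g⟫ := by rw [hbcf]
  refine ⟨?_, key⟩
  -- boundedness via the closed graph theorem
  have hadj : ∀ k : 𝔥, ∃ b : 𝔟, ∀ ψ : 𝔟, ⟪PΘ ψ, k⟫ = ⟪ψ, b⟫ := by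
    intro k
    obtain ⟨g, hg, -, -⟩ := hRt.1 k
    exact ⟨γD g, fun ψ => key ψ k g hg⟩
  have hcont : Continuous PΘ := by
    apply PΘ.continuous_of_seq_closed_graph
    intro u x y hu hPu
    refine ext_inner_right ℂ fun k => ?_
    obtain ⟨b, hb⟩ := hadj k
    have h1 : Filter.Tendsto (fun n => ⟪PΘ (u n), k⟫) Filter.atTop (nhds ⟪y, k⟫) :=
      Filter.Tendsto.inner hPu tendsto_const_nhds
    have h2 : Filter.Tendsto (fun n => ⟪u n, b⟫) Filter.atTop (nhds ⟪x, b⟫) :=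
      Filter.Tendsto.inner hu tendsto_const_nhds
    have heq : (fun n => ⟪PΘ (u n), k⟫) = fun n => ⟪u n, b⟫ := funext fun n => hb (u n)
    rw [heq] at h1
    have : ⟪y, k⟫ = ⟪x, b⟫ := tendsto_nhds_unique h1 h2
    rw [this, ← hb x]
  obtain ⟨C, -, hC⟩ := SemilinearMapClass.bound_of_continuous PΘ hcont
  exact ⟨C, hC⟩
end

section
/- Assume Ω ⊂ ℝⁿ is a bounded Lipschitz domain, q ∈ L^∞(Ω) complex-valued, and Θ ∈ B(L²(∂Ω)). Let A_D and A_Θ be the Dirichlet and Robin realizations of −Δ + q, P(z) the Poisson (solution) operator for the Dirichlet problem, P̃(z̄)* = −γ_N(A_D − z)⁻¹ its dual counterpart, and D(z) the Dirichlet-to-Neumann map. Then for every z ∈ ρ(A_D) ∩ ρ(A_Θ) the Krein-type resolvent formula (A_Θ − z)⁻¹ = (A_D − z)⁻¹ + P(z) (D(z) − Θ)⁻¹ P̃(z̄)* holds in B(L²(Ω)). -/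
open scoped ComplexInnerProductSpace ComplexConjugate

/-
Abstract setting for the Schrödinger operator on a bounded Lipschitz domain:
`𝔥` plays the role of `L²(Ω)`, `𝔟` that of `L²(∂Ω)`, `V ⊆ 𝔥` that of `H^{3/2}_Δ(Ω)`,
`L, Lt : V → 𝔥` those of the differential expressions `-Δ + q` and `-Δ + q̄`, and
`γD, γN : V → 𝔟` the Dirichlet and Neumann trace maps, subject to Green's second identity.
-/
variable {𝔥 𝔟 : Type*}
  [NormedAddCommGroup 𝔥] [InnerProductSpace ℂ 𝔥] [CompleteSpace 𝔥]
  [NormedAddCommGroup 𝔟] [InnerProductSpace ℂ 𝔟] [CompleteSpace 𝔟]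

/-- `Q ∈ B(𝔟)` is a (two-sided, everywhere defined) inverse of `D(z) - Θ`, where `D(z)` is the
energy parameter dependent Dirichlet-to-Neumann map of the expression `L`. -/
def IsDtNInverse {𝔥 𝔟 : Type*}
    [NormedAddCommGroup 𝔥] [InnerProductSpace ℂ 𝔥]
    [NormedAddCommGroup 𝔟] [InnerProductSpace ℂ 𝔟]
    {V : Submodule ℂ 𝔥} (L : V →ₗ[ℂ] 𝔥) (γD γN : V →ₗ[ℂ] 𝔟)
    (Θ : 𝔟 →L[ℂ] 𝔟) (z : ℂ) (Q : 𝔟 →L[ℂ] 𝔟) : Prop :=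
  (∀ ψ : 𝔟, ∃ f : V, L f = z • (f : 𝔥) ∧ γD f = Q ψ ∧ γN f - Θ (γD f) = ψ) ∧
  ∀ f : V, L f = z • (f : 𝔥) → Q (γN f - Θ (γD f)) = γD f

/-!
STATEMENT 19: Krein-type resolvent formula for Schrödinger operators with complex potentials:
for `z ∈ ρ(A_D) ∩ ρ(A_Θ)`,
`(A_Θ - z)⁻¹ = (A_D - z)⁻¹ + P(z) (D(z) - Θ)⁻¹ P̃(z̄)*`  in `B(L²(Ω))`,
where `P(z)` is the Poisson operator for the Dirichlet problem and
`P̃(z̄)* = -γ_N (A_D - z)⁻¹`.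
-/

theorem krein_resolvent_formula_schrodinger
    (V : Submodule ℂ 𝔥) (L Lt : V →ₗ[ℂ] 𝔥) (γD γN : V →ₗ[ℂ] 𝔟)
    -- Green's second identity :
    (hGreen : ∀ f g : V,
      ⟪L f, (g : 𝔥)⟫ - ⟪(f : 𝔥), Lt g⟫ = ⟪γD f, γN g⟫ - ⟪γN f, γD g⟫)
    (Θ : 𝔟 →L[ℂ] 𝔟) (z : ℂ)
    -- `z ∈ ρ(A_Θ)` :
    (RΘ : 𝔥 →L[ℂ] 𝔥)
    (hRΘ : IsRealizationResolvent L (fun f => Θ (γD f) = γN f) z RΘ)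
    -- `z ∈ ρ(A_D)` :
    (RD : 𝔥 →L[ℂ] 𝔥)
    (hRD : IsRealizationResolvent L (fun f => γD f = 0) z RD)
    -- `(D(z) - Θ)⁻¹ ∈ B(L²(∂Ω))` :
    (Q : 𝔟 →L[ℂ] 𝔟) (hQ : IsDtNInverse L γD γN Θ z Q) :
    -- `(A_Θ - z)⁻¹ y = (A_D - z)⁻¹ y + P(z) Q (-γ_N (A_D - z)⁻¹ y)` for every `y ∈ L²(Ω)`,
    -- where `f = P(z) (Q (-γ_N f_D))` is the Dirichlet solution with trace `Q (-γ_N f_D)` :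
    ∀ y : 𝔥, ∀ fD : V, (fD : 𝔥) = RD y →
      ∃ f : V, L f = z • (f : 𝔥) ∧ γD f = Q (-(γN fD)) ∧
        RΘ y = RD y + (f : 𝔥) := by
  intro y fD hfD
  obtain ⟨fD', hfD', hbc', heq'⟩ := hRD.1 y
  have hfDeq : fD = fD' := Subtype.ext (by rw [hfD, hfD'])
  subst hfDeq
  obtain ⟨g, hLg, hγDg, hψ⟩ := hQ.1 (-(γN fD))
  refine ⟨g, hLg, hγDg, ?_⟩
  have hbcsum : Θ (γD (fD + g)) = γN (fD + g) := by
    simp only [map_add, hbc', map_zero, zero_add]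
    have := hψ
    have hΘg : Θ (γD g) = γN g + γN fD := by
      have : γN g - Θ (γD g) = -(γN fD) := hψ
      linear_combination (norm := abel) -this
    rw [hΘg]; abel
  have key := hRΘ.2 (fD + g) hbcsum
  have hsum : L (fD + g) - z • ((fD + g : V) : 𝔥) = y := by
    have : ((fD + g : V) : 𝔥) = (fD : 𝔥) + (g : 𝔥) := rfl
    rw [map_add, this, smul_add, hLg]
    calc L fD + z • (g : 𝔥) - (z • (fD : 𝔥) + z • (g : 𝔥))
        = L fD - z • (fD : 𝔥) := by abel
      _ = y := heq'
  rw [hsum] at key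
  rw [key, ← hfD]
  rfl
end
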